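/- For every integer n ≥ 1 and all real x, the derivative of the degenerate Bell polynomial satisfies Bel'_{n,λ}(x) = ∑_{m=0}^{n-1} C(n,m) · Bel_{m,λ}(x) · (1)_{n-m,λ}. -/

import Mathlib

open Finset

/-- Degenerate falling factorial `(x)_{n,λ}`. -/
noncomputable def degFall (lam x : ℝ) (n : ℕ) : ℝ := ∏ i ∈ Finset.range n, (x - i * lam)

/-- Ordinary falling factorial `(x)_k`. -/
noncomputable def fall (x : ℝ) (k : ℕ) : ℝ := ∏ i ∈ Finset.range k, (x - i)

/-!
Write `Δ f (z) = f (z + 1) - f z`. On the falling factorials `Δ` acts like `d/dx` on the monomials,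
`Δ (z)_{k+1} = (k + 1) (z)_k`, so it suffices to check the claimed identity for the polynomial
`∑ₖ S_{2,λ}(n,k) (z)_k = (z)_{n,λ}` in place of `Bel_{n,λ}`, and then transport it back
coefficientwise, the falling factorials being linearly independent. For `(z)_{n,λ}` the identity is
the binomial (Vandermonde) formula `(z + 1)_{n,λ} = ∑ₘ C(n,m) (z)_{m,λ} (1)_{n-m,λ}`.
-/

lemma degFall_succ (lam x : ℝ) (n : ℕ) :
    degFall lam x (n + 1) = degFall lam x n * (x - n * lam) :=
  prod_range_succ _ n

theorem degFall_add_antidiagonal (lam x y : ℝ) (n : ℕ) :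
    degFall lam (x + y) n =
      ∑ ij ∈ antidiagonal n, (n.choose ij.1 : ℝ) * (degFall lam x ij.1 * degFall lam y ij.2) := by
  induction n with
  | zero => simp [degFall]
  | succ n ih =>
    rw [sum_antidiagonal_choose_succ_mul (fun i j => degFall lam x i * degFall lam y j),
      ← sum_add_distrib, degFall_succ, ih, sum_mul]
    refine sum_congr rfl fun ij hij => ?_
    have hn : (n : ℝ) = ij.1 + ij.2 := by exact_mod_cast (mem_antidiagonal.mp hij).symm
    rw [Nat.choose_symm_of_eq_add (mem_antidiagonal.mp hij).symm, degFall_succ, degFall_succ, hn]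
    ring

theorem degFall_add (lam x y : ℝ) (n : ℕ) :
    degFall lam (x + y) n =
      ∑ m ∈ range (n + 1), (n.choose m : ℝ) * degFall lam x m * degFall lam y (n - m) := by
  rw [degFall_add_antidiagonal, Nat.sum_antidiagonal_eq_sum_range_succ_mk]
  simp only [mul_assoc]

theorem degFall_add_one_sub (lam z : ℝ) (n : ℕ) :
    degFall lam (z + 1) n - degFall lam z n =
      ∑ m ∈ range n, (n.choose m : ℝ) * degFall lam z m * degFall lam 1 (n - m) := by
  rw [degFall_add, sum_range_succ]
  simp [degFall]

lemma fall_eq_eval_descPochhammer (x : ℝ) (k : ℕ) : fall x k = (descPochhammer ℝ k).eval x :=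
  (descPochhammer_eval_eq_prod_range k x).symm

lemma fall_natCast (j k : ℕ) : fall j k = j.descFactorial k := by
  rw [fall_eq_eval_descPochhammer, descPochhammer_eval_eq_descFactorial]

@[simp]
lemma fall_zero (x : ℝ) : fall x 0 = 1 :=
  prod_range_zero _

lemma fall_add_one_succ_sub (z : ℝ) (k : ℕ) :
    fall (z + 1) (k + 1) - fall z (k + 1) = (k + 1) * fall z k := by
  have hshift : fall (z + 1) (k + 1) = fall z k * (z + 1) := by
    simp only [fall, prod_range_succ', Nat.cast_add, Nat.cast_one, Nat.cast_zero, sub_zero]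
    congr 1
    exact prod_congr rfl fun i _ => by ring
  rw [hshift]
  simp only [fall, prod_range_succ]
  ring

theorem sum_mul_fall_add_one_sub (a : ℕ → ℝ) (N : ℕ) (z : ℝ) :
    ∑ k ∈ range (N + 1), a k * fall (z + 1) k - ∑ k ∈ range (N + 1), a k * fall z k =
      ∑ k ∈ range N, (k + 1) * a (k + 1) * fall z k := by
  rw [← sum_sub_distrib, sum_range_succ']
  simp only [← mul_sub, fall_add_one_succ_sub, fall_zero, sub_self, add_zero]
  exact sum_congr rfl fun k _ => by ring

theorem deriv_sum_mul_pow (a : ℕ → ℝ) (N : ℕ) (x : ℝ) :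
    deriv (fun y => ∑ k ∈ range (N + 1), a k * y ^ k) x =
      ∑ k ∈ range N, (k + 1) * a (k + 1) * x ^ k := by
  have hderiv := HasDerivAt.fun_sum fun k (_ : k ∈ range (N + 1)) =>
    (hasDerivAt_pow k x).const_mul (a k)
  rw [hderiv.deriv, sum_range_succ']
  simp only [Nat.cast_zero, zero_mul, mul_zero, add_zero, Nat.cast_add, Nat.cast_one,
    Nat.add_sub_cancel]
  exact sum_congr rfl fun k _ => by ring

-- The falling factorials are triangular with respect to evaluation at `0, 1, 2, …`.
theorem eq_zero_of_sum_mul_fall_eq_zero {N : ℕ} {a : ℕ → ℝ}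
    (h : ∀ z, ∑ k ∈ range N, a k * fall z k = 0) {k : ℕ} (hk : k < N) : a k = 0 := by
  induction k using Nat.strong_induction_on with
  | _ k ih =>
    have hk_term : ∑ j ∈ range N, a j * fall k j = a k * fall k k := by
      refine sum_eq_single_of_mem k (mem_range.mpr hk) fun j _ hjk => ?_
      rcases hjk.lt_or_gt with hj | hj
      · rw [ih j hj (hj.trans hk), zero_mul]
      · rw [fall_natCast, Nat.descFactorial_eq_zero_iff_lt.mpr hj, Nat.cast_zero, mul_zero]
    have hne : fall (k : ℝ) k ≠ 0 := by
      rw [fall_natCast, Nat.descFactorial_self]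
      exact_mod_cast k.factorial_ne_zero
    simpa [hne, hk_term] using h k

theorem sum_mul_pow_eq_of_sum_mul_fall_eq {N : ℕ} {a b : ℕ → ℝ}
    (h : ∀ z, ∑ k ∈ range N, a k * fall z k = ∑ k ∈ range N, b k * fall z k) (x : ℝ) :
    ∑ k ∈ range N, a k * x ^ k = ∑ k ∈ range N, b k * x ^ k := by
  have hab : ∀ k < N, a k - b k = 0 := fun k hk =>
    eq_zero_of_sum_mul_fall_eq_zero (a := fun k => a k - b k)
      (fun z => by simp only [sub_mul, sum_sub_distrib, h, sub_self]) hk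
  exact sum_congr rfl fun k hk => by rw [sub_eq_zero.mp (hab k (mem_range.mp hk))]

theorem sum_range_mul_sum_range_succ {R : Type*} [CommSemiring R] (n : ℕ) (c : ℕ → R)
    (S : ℕ → ℕ → R) (φ : ℕ → R) :
    ∑ m ∈ range n, c m * ∑ k ∈ range (m + 1), S m k * φ k =
      ∑ k ∈ range n, (∑ m ∈ Ico k n, c m * S m k) * φ k := by
  simp only [range_eq_Ico, mul_sum, sum_mul]
  rw [← sum_Ico_Ico_comm]
  exact sum_congr rfl fun k _ => sum_congr rfl fun m _ => by ring

theorem deriv_degenerate_bell_general (lam : ℝ) (S2 : ℕ → ℕ → ℝ)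
    (hS2 : ∀ (n : ℕ) (x : ℝ), degFall lam x n = ∑ k ∈ range (n + 1), S2 n k * fall x k)
    (n : ℕ) (x : ℝ) :
    deriv (fun y => ∑ k ∈ range (n + 1), S2 n k * y ^ k) x =
      ∑ m ∈ range n, (n.choose m : ℝ) * (∑ k ∈ range (m + 1), S2 m k * x ^ k) *
        degFall lam 1 (n - m) := by
  have hexpand : ∀ φ : ℕ → ℝ,
      ∑ m ∈ range n, (n.choose m : ℝ) * (∑ k ∈ range (m + 1), S2 m k * φ k) *
          degFall lam 1 (n - m) =
        ∑ k ∈ range n,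
          (∑ m ∈ Ico k n, (n.choose m : ℝ) * degFall lam 1 (n - m) * S2 m k) * φ k := by
    intro φ
    rw [← sum_range_mul_sum_range_succ]
    exact sum_congr rfl fun m _ => by ring
  rw [deriv_sum_mul_pow, hexpand]
  refine sum_mul_pow_eq_of_sum_mul_fall_eq (fun z => ?_) x
  rw [← hexpand, ← sum_mul_fall_add_one_sub, ← hS2, ← hS2, degFall_add_one_sub]
  exact sum_congr rfl fun m _ => by rw [hS2]

/-- with `Bel_{n,λ}(x) = ∑_{k=0}^n S_{2,λ}(n,k) x^k`, one has
`Bel'_{n,λ}(x) = ∑_{m=0}^{n-1} C(n,m) Bel_{m,λ}(x) (1)_{n-m,λ}` for `n ≥ 1`. -/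
theorem deriv_degenerate_bell (lam : ℝ) (S2 : ℕ → ℕ → ℝ)
    (hS2 : ∀ (n : ℕ) (x : ℝ), degFall lam x n = ∑ k ∈ range (n + 1), S2 n k * fall x k)
    (n : ℕ) (hn : 1 ≤ n) (x : ℝ) :
    deriv (fun y => ∑ k ∈ range (n + 1), S2 n k * y ^ k) x =
      ∑ m ∈ range n, (n.choose m : ℝ) * (∑ k ∈ range (m + 1), S2 m k * x ^ k) *
        degFall lam 1 (n - m) :=
  deriv_degenerate_bell_general lam S2 hS2 n x
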